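/- Let V satisfy hypothesis (V) and η satisfy hypothesis (η), and fix a vector of probability measures ρ̄ ∈ P(ℝ^d)^k. For r ∈ 𝒳 = L^∞([0,T], P(ℝ^d)^k), let 𝒬(r) denote the Lagrangian solution of the decoupled system ∂_t ρ^i + div(ρ^i V^i(t,x,(η^i ⋆ r_t)(x))) = 0 with initial condition ρ̄. Then there is a constant C depending only on Lip_x(V), Lip_r(V), Lip_x(η) and ‖ρ̄‖_M such that for all r, s ∈ 𝒳, sup_{t∈[0,T]} 𝒲₁(𝒬(r)_t, 𝒬(s)_t) ≤ C T e^{CT} · sup_{t∈[0,T]} 𝒲₁(r_t, s_t); in particular, for T small enough that C T e^{CT} < 1, the map 𝒬 is a contraction of (𝒳, d) with d(μ,ν) = sup_{t∈[0,T]} 𝒲₁(μ_t, ν_t). -/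

import Mathlib

open MeasureTheory
open scoped ENNReal NNReal Topology

noncomputable section

/-- `ℝ^d` with the Euclidean norm. -/
abbrev Euc (d : ℕ) : Type := EuclideanSpace ℝ (Fin d)

/-- Convolution in space of a kernel `f` with a bounded measure `μ`:
`(f * μ)(x) = ∫_{ℝ^d} f (x - y) dμ(y)`. -/
def convol {d : ℕ} (f : Euc d → ℝ) (μ : Measure (Euc d)) (x : Euc d) : ℝ :=
  ∫ y, f (x - y) ∂μ

/-- The Wasserstein distance of order one between two nonnegative Borel measures on `ℝ^d`:
the infimum of `∫ |x - y| dγ(x,y)` over all nonnegative measures `γ` on the product whose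
first marginal is `μ` and whose second marginal is `ν` (the value may be `+∞`). -/
def W1 {d : ℕ} (μ ν : Measure (Euc d)) : ℝ≥0∞ :=
  ⨅ (γ : Measure (Euc d × Euc d)) (_ : γ.map Prod.fst = μ) (_ : γ.map Prod.snd = ν),
    ∫⁻ p, (‖p.1 - p.2‖₊ : ℝ≥0∞) ∂γ

/-- Wasserstein distance of order one between vectors of measures:
`𝒲₁(ρ, σ) = Σᵢ W₁(ρ^i, σ^i)`. -/
def Wvec {d k : ℕ} (ρ σ : Fin k → Measure (Euc d)) : ℝ≥0∞ :=
  ∑ i, W1 (ρ i) (σ i)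

/-- Hypothesis (V): the vector fields `V^i : ℝ₊ × ℝ^d × ℝ^k → ℝ^d` are uniformly bounded
(by `MV`), measurable in time, and Lipschitz in `(x, r)` uniformly in time, with constant
`Lx` in `x` and `Lr` in `r ∈ ℝ^k` (with the `ℓ¹` norm). -/
def HypV {d k : ℕ} (V : Fin k → ℝ → Euc d → (Fin k → ℝ) → Euc d) (MV Lx Lr : ℝ) : Prop :=
  (∀ i t x r, ‖V i t x r‖ ≤ MV) ∧
  (∀ i x r, Measurable fun t => V i t x r) ∧
  (∀ i t x x' r r',
    ‖V i t x r - V i t x' r'‖ ≤ Lx * ‖x - x'‖ + Lr * ∑ j, |r j - r' j|)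

/-- Hypothesis (η): the convolution kernels `η^{i,j} : ℝ₊ × ℝ^d → ℝ` are uniformly bounded
(by `Mη`), measurable in time, and Lipschitz in `x` uniformly in time with constant `Lη`. -/
def HypEta {d k : ℕ} (η : Fin k → Fin k → ℝ → Euc d → ℝ) (Mη Lη : ℝ) : Prop :=
  (∀ i j t x, |η i j t x| ≤ Mη) ∧
  (∀ i j x, Measurable fun t => η i j t x) ∧
  (∀ i j t x x', |η i j t x - η i j t x'| ≤ Lη * ‖x - x'‖)

/-- `ρ ∈ L^∞(S, 𝓜⁺(ℝ^d)^k)`: a family of nonnegative bounded measures, weakly measurable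
in time and with uniformly bounded total masses on the time set `S`. -/
def IsLinftyFamily {d k : ℕ} (S : Set ℝ) (ρ : Fin k → ℝ → Measure (Euc d)) : Prop :=
  (∀ (i : Fin k) (φ : Euc d → ℝ), Continuous φ → HasCompactSupport φ →
      Measurable fun t => ∫ x, φ x ∂(ρ i t)) ∧
  ∃ M : ℝ≥0∞, M < ∞ ∧ ∀ (i : Fin k), ∀ t ∈ S, ρ i t Set.univ ≤ M

/-- The nonlocal vector field `x ↦ V^i(t, x, (η^i_t ⋆ r_t)(x))`. -/
def nonlocalField {d k : ℕ} (V : Fin k → ℝ → Euc d → (Fin k → ℝ) → Euc d)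
    (η : Fin k → Fin k → ℝ → Euc d → ℝ) (r : Fin k → ℝ → Measure (Euc d))
    (i : Fin k) (t : ℝ) (x : Euc d) : Euc d :=
  V i t x fun j => convol (η i j t) (r j t) x

/-- Weak measure solution on `[0, T]` of the system
`∂ₜ ρ^i + div (ρ^i V^i(t, x, (η^i ⋆ ρ_t)(x))) = 0`, `ρ^i(0) = ρ₀^i`: for every `i` and every
test function `φ ∈ C_c^∞((-∞, T) × ℝ^d, ℝ)`,
`∫₀^T ∫ (∂ₜφ + V^i(t,x,(η^i_t ⋆ ρ_t)(x)) · ∇φ) dρ^i_t dt + ∫ φ(0, ·) dρ₀^i = 0`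
(here `fderiv ℝ φ (t,x) (1, b) = ∂ₜφ(t,x) + b · ∇φ(t,x)`). -/
def IsWeakSol {d k : ℕ} (T : ℝ) (V : Fin k → ℝ → Euc d → (Fin k → ℝ) → Euc d)
    (η : Fin k → Fin k → ℝ → Euc d → ℝ)
    (ρ₀ : Fin k → Measure (Euc d)) (ρ : Fin k → ℝ → Measure (Euc d)) : Prop :=
  ∀ i : Fin k, ∀ φ : ℝ × Euc d → ℝ,
    ContDiff ℝ (⊤ : ℕ∞) φ → HasCompactSupport φ → (∀ p : ℝ × Euc d, T ≤ p.1 → φ p = 0) →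
    (∫ t in Set.Ioc (0 : ℝ) T,
        ∫ x, fderiv ℝ φ (t, x) (1, nonlocalField V η ρ i t x) ∂(ρ i t))
      + (∫ x, φ (0, x) ∂(ρ₀ i)) = 0

/-- Weak measure solution on `ℝ₊` of the system
`∂ₜ ρ^i + div (ρ^i V^i(t, x, (η^i ⋆ ρ_t)(x))) = 0`, `ρ^i(0) = ρ₀^i`
(test functions `φ ∈ C_c^∞(ℝ × ℝ^d, ℝ)`). -/
def IsWeakSolNN {d k : ℕ} (V : Fin k → ℝ → Euc d → (Fin k → ℝ) → Euc d)
    (η : Fin k → Fin k → ℝ → Euc d → ℝ)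
    (ρ₀ : Fin k → Measure (Euc d)) (ρ : Fin k → ℝ → Measure (Euc d)) : Prop :=
  ∀ i : Fin k, ∀ φ : ℝ × Euc d → ℝ,
    ContDiff ℝ (⊤ : ℕ∞) φ → HasCompactSupport φ →
    (∫ t in Set.Ioi (0 : ℝ),
        ∫ x, fderiv ℝ φ (t, x) (1, nonlocalField V η ρ i t x) ∂(ρ i t))
      + (∫ x, φ (0, x) ∂(ρ₀ i)) = 0

/-- `X` is a flow on the time set `S` of the (bounded, measurable in time, Lipschitz in
space) time-dependent vector field `b`: `X(0, x) = x` and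
`X(t, x) = x + ∫₀ᵗ b(s, X(s, x)) ds`, the Carathéodory formulation of the ODE
`∂ₜ X(t,x) = b(t, X(t,x))`. -/
def IsFlowOn {d : ℕ} (S : Set ℝ) (b : ℝ → Euc d → Euc d) (X : ℝ → Euc d → Euc d) : Prop :=
  (∀ x, X 0 x = x) ∧
  ∀ x, ∀ t ∈ S, X t x = x + ∫ s in (0 : ℝ)..t, b s (X s x)

/-- Lagrangian solution on the time set `S` of the system of continuity equations with
velocity fields `b^i`: for each `i`, `ρ^i_t = (X^i_t)_# ρ₀^i` where `X^i` is a flow of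
`b^i`. -/
def IsLagSolWith {d k : ℕ} (S : Set ℝ) (b : Fin k → ℝ → Euc d → Euc d)
    (ρ₀ : Fin k → Measure (Euc d)) (ρ : Fin k → ℝ → Measure (Euc d)) : Prop :=
  ∀ i : Fin k, ∃ X : ℝ → Euc d → Euc d,
    IsFlowOn S (b i) X ∧ (∀ t ∈ S, Measurable (X t)) ∧
    ∀ t ∈ S, ρ i t = (ρ₀ i).map (X t)

/-- Lagrangian solution on the time set `S` of the nonlocal system
`∂ₜ ρ^i + div (ρ^i V^i(t, x, (η^i ⋆ ρ_t)(x))) = 0`, `ρ^i(0) = ρ₀^i`. -/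
def IsLagSol {d k : ℕ} (S : Set ℝ) (V : Fin k → ℝ → Euc d → (Fin k → ℝ) → Euc d)
    (η : Fin k → Fin k → ℝ → Euc d → ℝ)
    (ρ₀ : Fin k → Measure (Euc d)) (ρ : Fin k → ℝ → Measure (Euc d)) : Prop :=
  IsLagSolWith S (nonlocalField V η ρ) ρ₀ ρ

open Set

/-!
Both solutions push the same initial measure forward, `𝒬(r)^i_t = (X_t)_# ρ̄^i` and
`𝒬(s)^i_t = (Y_t)_# ρ̄^i`, so `(X_t, Y_t)_# ρ̄^i` couples them and
`W₁(𝒬(r)^i_t, 𝒬(s)^i_t) ≤ sup_x |X_t x - Y_t x|`. Along the two trajectories the velocities differ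
by at most `L |X - Y| + c · sup_t 𝒲₁(r_t, s_t)`: this is the Lipschitz bound on `V` together with
`|∫ f dμ - ∫ f dν| ≤ Lip(f) W₁(μ, ν)` applied to the convolutions `η^{i,j} * r^j`. Grönwall's
inequality then gives `|X_t x - Y_t x| ≤ c t e^{Lt} sup_t 𝒲₁(r_t, s_t)`.

The flows are only given through the integral equation `X(t) = x + ∫₀ᵗ b(s, X(s)) ds`, so the
integrability of the velocity along a trajectory has to be recovered from the measurability of
`t ↦ r_t`, which in turn comes from its weak measurability.
-/

section Wasserstein

variable {d : ℕ}

theorem W1_le_lintegral_edist {μ ν : Measure (Euc d)} (γ : Measure (Euc d × Euc d))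
    (hγμ : γ.map Prod.fst = μ) (hγν : γ.map Prod.snd = ν) :
    W1 μ ν ≤ ∫⁻ p, edist p.1 p.2 ∂γ := by
  simp only [edist_eq_enorm_sub, enorm_eq_nnnorm]
  exact iInf₂_le_of_le γ hγμ (iInf_le _ hγν)

theorem W1_map_map_le (μ : Measure (Euc d)) [IsProbabilityMeasure μ] {f g : Euc d → Euc d}
    (hf : Measurable f) (hg : Measurable g) {K : ℝ≥0∞} (hfg : ∀ x, edist (f x) (g x) ≤ K) :
    W1 (μ.map f) (μ.map g) ≤ K := by
  have hfg' : Measurable fun x => (f x, g x) := hf.prodMk hg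
  calc W1 (μ.map f) (μ.map g)
      ≤ ∫⁻ p, edist p.1 p.2 ∂(μ.map fun x => (f x, g x)) :=
        W1_le_lintegral_edist _ (by rw [Measure.map_map measurable_fst hfg']; rfl)
          (by rw [Measure.map_map measurable_snd hfg']; rfl)
    _ = ∫⁻ x, edist (f x) (g x) ∂μ := lintegral_map (by fun_prop) hfg'
    _ ≤ K := (lintegral_mono hfg).trans_eq (by simp)

theorem W1_self (μ : Measure (Euc d)) [IsProbabilityMeasure μ] : W1 μ μ = 0 :=
  nonpos_iff_eq_zero.1 <| by
    simpa using W1_map_map_le μ measurable_id measurable_id (K := 0) (by simp)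

theorem Continuous.integrable_of_abs_le {α : Type*} [MeasurableSpace α] [TopologicalSpace α]
    [OpensMeasurableSpace α] {μ : Measure α} [IsFiniteMeasure μ] {f : α → ℝ}
    (hf : Continuous f) {M : ℝ} (hM : ∀ x, |f x| ≤ M) : Integrable f μ :=
  .of_bound hf.aestronglyMeasurable M (ae_of_all _ hM)

theorem LipschitzWith.edist_integral_le_mul_W1 {f : Euc d → ℝ} {K : ℝ≥0}
    (hf : LipschitzWith K f) {M : ℝ} (hM : ∀ x, |f x| ≤ M) (μ ν : Measure (Euc d))
    [IsProbabilityMeasure μ] [IsProbabilityMeasure ν] :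
    edist (∫ x, f x ∂μ) (∫ x, f x ∂ν) ≤ K * W1 μ ν := by
  have hfc := hf.continuous
  have hcoupling : ∀ γ : Measure (Euc d × Euc d), γ.map Prod.fst = μ → γ.map Prod.snd = ν →
      edist (∫ x, f x ∂μ) (∫ x, f x ∂ν) ≤ K * ∫⁻ p, edist p.1 p.2 ∂γ := by
    rintro γ rfl rfl
    have : IsProbabilityMeasure γ :=
      ⟨by rw [← preimage_univ (f := Prod.fst), ← Measure.map_apply measurable_fst .univ]
          exact measure_univ⟩
    rw [integral_map measurable_fst.aemeasurable hfc.aestronglyMeasurable,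
      integral_map measurable_snd.aemeasurable hfc.aestronglyMeasurable,
      ← lintegral_const_mul _ (by fun_prop)]
    refine (edist_integral_le_lintegral_edist ?_ ?_).trans (lintegral_mono fun p => hf _ _)
    all_goals exact (by fun_prop : Continuous _).integrable_of_abs_le fun p => hM _
  rcases eq_or_ne (K : ℝ≥0∞) 0 with hK | hK
  · simpa [hK] using hcoupling (μ.prod ν) (by simp) (by simp)
  simp only [W1, ENNReal.mul_iInf_of_ne hK ENNReal.coe_ne_top]
  refine le_iInf₂ fun γ hγμ => le_iInf fun hγν => ?_
  simpa [edist_eq_enorm_sub, enorm_eq_nnnorm] using hcoupling γ hγμ hγν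

theorem LipschitzWith.edist_convol_le {f : Euc d → ℝ} {K : ℝ≥0} (hf : LipschitzWith K f)
    {M : ℝ} (hM : ∀ x, |f x| ≤ M) (μ ν : Measure (Euc d)) [IsProbabilityMeasure μ]
    [IsProbabilityMeasure ν] (x y : Euc d) :
    edist (convol f μ x) (convol f ν y) ≤ K * (edist x y + W1 μ ν) := by
  have hfc := hf.continuous
  have hshift : ∀ z, LipschitzWith K fun w => f (z - w) := fun z => by
    simpa [Function.comp_def] using hf.comp (IsometryEquiv.subLeft z).isometry.lipschitz
  have hxy : edist (convol f μ x) (convol f μ y) ≤ K * edist x y := by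
    refine (edist_integral_le_lintegral_edist ?_ ?_).trans ?_
    · exact (by fun_prop : Continuous _).integrable_of_abs_le fun w => hM _
    · exact (by fun_prop : Continuous _).integrable_of_abs_le fun w => hM _
    · calc ∫⁻ w, edist (f (x - w)) (f (y - w)) ∂μ ≤ ∫⁻ _, K * edist x y ∂μ :=
            lintegral_mono fun w => by simpa using hf (x - w) (y - w)
        _ = K * edist x y := by simp
  calc edist (convol f μ x) (convol f ν y)
      ≤ edist (convol f μ x) (convol f μ y) + edist (convol f μ y) (convol f ν y) :=
        edist_triangle _ _ _
    _ ≤ K * edist x y + K * W1 μ ν :=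
        add_le_add hxy ((hshift y).edist_integral_le_mul_W1 (fun w => hM _) μ ν)
    _ = K * (edist x y + W1 μ ν) := (mul_add _ _ _).symm

end Wasserstein

theorem gronwallBound_zero_le {K ε x : ℝ} (hK : 0 ≤ K) (hε : 0 ≤ ε) :
    gronwallBound 0 K ε x ≤ ε * x * Real.exp (K * x) := by
  rcases hK.eq_or_lt with rfl | hK
  · simp [gronwallBound_K0]
  have hexp : Real.exp (K * x) - 1 ≤ K * x * Real.exp (K * x) := by
    have h := Real.add_one_le_exp (-(K * x))
    rw [Real.exp_neg] at h
    have := Real.exp_pos (K * x)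
    field_simp at h
    nlinarith
  simp only [gronwallBound_of_K_ne_0 hK.ne', zero_mul, zero_add]
  rw [div_mul_eq_mul_div, div_le_iff₀ hK]
  nlinarith [mul_le_mul_of_nonneg_left hexp hε]

theorem norm_integral_le_gronwallBound {E : Type*} [NormedAddCommGroup E] [NormedSpace ℝ E]
    {h : ℝ → E} {K ε T : ℝ} (hK : 0 ≤ K) (hh : IntervalIntegrable h volume 0 T)
    (bound : ∀ u ∈ Icc 0 T, ‖h u‖ ≤ K * ‖∫ v in 0..u, h v‖ + ε) :
    ∀ t ∈ Icc 0 T, ‖∫ v in 0..t, h v‖ ≤ gronwallBound 0 K ε t := by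
  intro t ht
  have hT : 0 ≤ T := ht.1.trans ht.2
  set D : ℝ → ℝ := fun u => ‖∫ v in 0..u, h v‖
  have hD : ContinuousOn D (Icc 0 T) := by
    simpa [uIcc_of_le hT] using (intervalIntegral.continuousOn_primitive_interval'
      hh left_mem_uIcc).norm
  -- `D` extended continuously to all of `ℝ`, so that the FTC applies everywhere
  set D' : ℝ → ℝ := fun u => D (projIcc 0 T hT u)
  have hD' : Continuous D' :=
    hD.comp_continuous (continuous_subtype_val.comp continuous_projIcc)
      fun u => (projIcc 0 T hT u).2
  have hD'D : ∀ u ∈ Icc 0 T, D' u = D u := fun u hu => by simp [D', projIcc_of_mem hT hu]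
  set G : ℝ → ℝ := fun u => ∫ v in 0..u, (K * D' v + ε)
  have hG : ∀ u, HasDerivAt G (K * D' u + ε) u := fun u =>
    ((hD'.const_mul K).add continuous_const).integral_hasStrictDerivAt 0 u |>.hasDerivAt
  have hDG : ∀ u ∈ Icc 0 T, D u ≤ G u := by
    intro u hu
    refine (intervalIntegral.norm_integral_le_integral_norm hu.1).trans ?_
    refine intervalIntegral.integral_mono_on hu.1
      (hh.mono_set (uIcc_subset_uIcc_left (by simpa [uIcc_of_le hT] using hu))).norm
      (by apply Continuous.intervalIntegrable; fun_prop) fun v hv => ?_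
    have hv' : v ∈ Icc 0 T := ⟨hv.1, hv.2.trans hu.2⟩
    rw [hD'D v hv']
    exact bound v hv'
  have hGbound := le_gronwallBound_of_liminf_deriv_right_le (f := G) (δ := 0)
    (fun u _ => (hG u).continuousAt.continuousWithinAt)
    (fun u _ r hr => (hG u).hasDerivWithinAt.liminf_right_slope_le hr) (by simp [G])
    (fun u hu => by
      have hu' := Ico_subset_Icc_self hu
      rw [hD'D u hu']
      gcongr
      exact hDG u hu') t ht
  simpa using (hDG t ht).trans hGbound

/-- `t ↦ ∫₀ᵗ g` is Lipschitz on the interval of those `t` for which `g` is integrable on `[0, t]`,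
and is the junk value `0` elsewhere. -/
theorem measurable_primitive_of_norm_le {E : Type*} [NormedAddCommGroup E] [NormedSpace ℝ E]
    [MeasurableSpace E] [BorelSpace E] {g : ℝ → E} {M : ℝ} (hg : ∀ u, ‖g u‖ ≤ M) :
    Measurable fun t => ∫ u in 0..t, g u := by
  classical
  set A := {t : ℝ | IntervalIntegrable g volume 0 t}
  have hA : A.OrdConnected := ⟨fun t₁ h₁ t₂ h₂ s hs =>
    h₁.trans ((h₁.symm.trans h₂).mono_set (uIcc_subset_uIcc left_mem_uIcc
      (mem_uIcc_of_le hs.1 hs.2)))⟩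
  have hcont : ContinuousOn (fun t => ∫ u in 0..t, g u) A := by
    refine (LipschitzOnWith.of_dist_le_mul fun t₁ h₁ t₂ h₂ => ?_).continuousOn (K := M.toNNReal)
    rw [dist_eq_norm, intervalIntegral.integral_interval_sub_left h₁ h₂, Real.dist_eq]
    exact (intervalIntegral.norm_integral_le_of_norm_le_const fun u _ => hg u).trans
      (by rw [abs_sub_comm]; gcongr; exact Real.le_coe_toNNReal M)
  have hpiece : (fun t => ∫ u in 0..t, g u) = A.piecewise (fun t => ∫ u in 0..t, g u) 0 := by
    ext t
    by_cases ht : t ∈ A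
    · simp [ht]
    · simp [ht, intervalIntegral.integral_undef ht]
  rw [hpiece]
  exact hcont.measurable_piecewise continuousOn_const hA.measurableSet

section Flow

variable {d : ℕ}

theorem IsFlowOn.intervalIntegrable {T M : ℝ} {b b' : ℝ → Euc d → Euc d} {X : ℝ → Euc d → Euc d}
    (hX : IsFlowOn (Icc 0 T) b X) (hT : 0 ≤ T) (hbM : ∀ u y, ‖b u y‖ ≤ M)
    (hb' : Measurable (Function.uncurry b')) (hbb' : EqOn b b' (Icc 0 T)) (x : Euc d) :
    IntervalIntegrable (fun u => b u (X u x)) volume 0 T := by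
  have hXx : AEMeasurable (fun u => X u x) (volume.restrict (Icc 0 T)) :=
    (measurable_const.add (measurable_primitive_of_norm_le fun u => hbM u (X u x))).aemeasurable
      |>.congr <| (ae_restrict_iff' measurableSet_Icc).2 <| ae_of_all _ fun u hu =>
        (hX.2 x u hu).symm
  have hbX : AEStronglyMeasurable (fun u => b u (X u x)) (volume.restrict (Icc 0 T)) :=
    (hb'.comp_aemeasurable (aemeasurable_id.prodMk hXx)).aestronglyMeasurable.congr <|
      (ae_restrict_iff' measurableSet_Icc).2 <| ae_of_all _ fun u hu =>
        congrFun (hbb' hu).symm (X u x)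
  rw [intervalIntegrable_iff_integrableOn_Icc_of_le hT]
  exact .of_bound measure_Icc_lt_top hbX M (ae_of_all _ fun u => hbM u _)

theorem IsFlowOn.norm_sub_le_gronwallBound {T K ε : ℝ} {b b' : ℝ → Euc d → Euc d}
    {X Y : ℝ → Euc d → Euc d} (hX : IsFlowOn (Icc 0 T) b X) (hY : IsFlowOn (Icc 0 T) b' Y)
    {x : Euc d} (hXi : IntervalIntegrable (fun u => b u (X u x)) volume 0 T)
    (hYi : IntervalIntegrable (fun u => b' u (Y u x)) volume 0 T) (hK : 0 ≤ K)
    (hbb' : ∀ u ∈ Icc 0 T, ∀ y z, ‖b u y - b' u z‖ ≤ K * ‖y - z‖ + ε) :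
    ∀ t ∈ Icc 0 T, ‖X t x - Y t x‖ ≤ gronwallBound 0 K ε t := by
  have hdiff : ∀ t ∈ Icc 0 T,
      X t x - Y t x = ∫ u in 0..t, (b u (X u x) - b' u (Y u x)) := by
    intro t ht
    have hsub : uIcc 0 t ⊆ uIcc 0 T :=
      uIcc_subset_uIcc_left (by simpa [uIcc_of_le (ht.1.trans ht.2)] using ht)
    rw [intervalIntegral.integral_sub (hXi.mono_set hsub) (hYi.mono_set hsub), hX.2 x t ht,
      hY.2 x t ht, add_sub_add_left_eq_sub]
  intro t ht
  rw [hdiff t ht]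
  refine norm_integral_le_gronwallBound hK (hXi.sub hYi) (fun u hu => ?_) t ht
  rw [← hdiff u hu]
  exact hbb' u hu _ _

end Flow

section WeakMeasurability

variable {X : Type*} [MetricSpace X] [ProperSpace X]

theorem hasCompactSupport_thickenedIndicator {δ : ℝ} (hδ : 0 < δ) {K : Set X}
    (hK : IsCompact K) : HasCompactSupport fun x => (thickenedIndicator hδ K x : ℝ) :=
  .intro (hK.cthickening (r := δ)) fun _ hx => by
    simp [thickenedIndicator_zero hδ K fun h => hx (Metric.thickening_subset_cthickening _ _ h)]

variable [MeasurableSpace X] [BorelSpace X]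

theorem borel_eq_generateFrom_isCompact :
    ‹MeasurableSpace X› = .generateFrom {K | IsCompact K} := by
  refine le_antisymm ?_ (MeasurableSpace.generateFrom_le fun K hK => hK.isClosed.measurableSet)
  rw [BorelSpace.measurable_eq (α := X), borel_eq_generateFrom_isClosed]
  refine MeasurableSpace.generateFrom_le fun F hF => ?_
  rw [← inter_univ F, ← iUnion_compactCovering X, inter_iUnion]
  exact .iUnion fun n => .basic _ ((isCompact_compactCovering X n).inter_left hF)

theorem measurable_of_measurable_integral_of_hasCompactSupport {α : Type*} [MeasurableSpace α]
    {μ : α → Measure X} [∀ a, IsProbabilityMeasure (μ a)]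
    (hμ : ∀ φ : X → ℝ, Continuous φ → HasCompactSupport φ → Measurable fun a => ∫ x, φ x ∂μ a) :
    Measurable μ := by
  refine .measure_of_isPiSystem_of_isProbabilityMeasure borel_eq_generateFrom_isCompact
    (fun K hK L hL _ => hK.inter hL) fun K hK => ?_
  have hδ : ∀ n : ℕ, (0 : ℝ) < 1 / (n + 1) := fun n => Nat.one_div_pos_of_nat
  refine measurable_of_tendsto_metrizable (fun n => ?_) <| tendsto_pi_nhds.2 fun a =>
    tendsto_lintegral_thickenedIndicator_of_isClosed (μ a) hK.isClosed hδ
      tendsto_one_div_add_atTop_nhds_zero_nat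
  have hφ : Continuous fun x => (thickenedIndicator (hδ n) K x : ℝ) := by fun_prop
  have hφint : ∀ a, ENNReal.ofReal (∫ x, (thickenedIndicator (hδ n) K x : ℝ) ∂μ a) =
      ∫⁻ x, thickenedIndicator (hδ n) K x ∂μ a := fun a => by
    rw [ofReal_integral_eq_lintegral_ofReal ?_ (ae_of_all _ fun x => by positivity)]
    · simp
    · exact hφ.integrable_of_abs_le fun x => by
        rw [NNReal.abs_eq]; exact_mod_cast thickenedIndicator_le_one (hδ n) K x
  simp only [← hφint]
  exact (hμ _ hφ (hasCompactSupport_thickenedIndicator (hδ n) hK)).ennreal_ofReal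

end WeakMeasurability

section NonlocalField

variable {d k : ℕ} {V : Fin k → ℝ → Euc d → (Fin k → ℝ) → Euc d}
  {η : Fin k → Fin k → ℝ → Euc d → ℝ} {MV Mη Lx Lr Lη : ℝ}

theorem HypV.mono (hV : HypV V MV Lx Lr) {Lx' Lr' : ℝ} (hx : Lx ≤ Lx') (hr : Lr ≤ Lr') :
    HypV V MV Lx' Lr' :=
  ⟨hV.1, hV.2.1, fun i t x x' r r' => (hV.2.2 i t x x' r r').trans <| by gcongr⟩

theorem HypEta.mono (hη : HypEta η Mη Lη) {Lη' : ℝ} (h : Lη ≤ Lη') : HypEta η Mη Lη' :=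
  ⟨hη.1, hη.2.1, fun i j t x x' => (hη.2.2 i j t x x').trans <| by gcongr⟩

theorem HypEta.lipschitzWith (hη : HypEta η Mη Lη) (hLη : 0 ≤ Lη) (i j : Fin k) (t : ℝ) :
    LipschitzWith ⟨Lη, hLη⟩ (η i j t) :=
  .of_dist_le_mul fun x x' => hη.2.2 i j t x x'

theorem HypV.continuous (hV : HypV V MV Lx Lr) (i : Fin k) (t : ℝ) :
    Continuous fun p : Euc d × (Fin k → ℝ) => V i t p.1 p.2 := by
  refine continuous_iff_continuousAt.2 fun p => tendsto_iff_norm_sub_tendsto_zero.2 ?_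
  refine squeeze_zero (fun _ => norm_nonneg _) (fun q => hV.2.2 i t q.1 p.1 q.2 p.2) ?_
  have : Continuous fun q : Euc d × (Fin k → ℝ) =>
      Lx * ‖q.1 - p.1‖ + Lr * ∑ j, |q.2 j - p.2 j| := by
    fun_prop
  simpa using this.tendsto p

theorem HypV.measurable_uncurry (hV : HypV V MV Lx Lr) (i : Fin k) :
    Measurable fun q : ℝ × Euc d × (Fin k → ℝ) => V i q.1 q.2.1 q.2.2 :=
  (measurable_uncurry_of_continuous_of_measurable
    (u := fun (p : Euc d × (Fin k → ℝ)) t => V i t p.1 p.2) (hV.continuous i)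
    fun p => hV.2.1 i p.1 p.2).comp measurable_swap

theorem HypEta.measurable_uncurry (hη : HypEta η Mη Lη) (i j : Fin k) :
    Measurable fun q : ℝ × Euc d => η i j q.1 q.2 := by
  have hcont : ∀ t, Continuous (η i j t) := fun t =>
    (hη.mono (le_max_left Lη 0)).lipschitzWith (le_max_right _ _) i j t |>.continuous
  exact (measurable_uncurry_of_continuous_of_measurable (u := fun x t => η i j t x) hcont
    fun x => hη.2.1 i j x).comp measurable_swap

theorem measurable_uncurry_nonlocalField (hV : HypV V MV Lx Lr) (hη : HypEta η Mη Lη)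
    {r : Fin k → ℝ → Measure (Euc d)} [∀ j t, IsProbabilityMeasure (r j t)]
    (hr : ∀ j, Measurable (r j)) (i : Fin k) :
    Measurable (Function.uncurry (nonlocalField V η r i)) := by
  have hconv : ∀ j, Measurable fun q : ℝ × Euc d => convol (η i j q.1) (r j q.1) q.2 := by
    intro j
    let κ : ProbabilityTheory.Kernel (ℝ × Euc d) (Euc d) :=
      ProbabilityTheory.Kernel.comap ⟨r j, hr j⟩ Prod.fst measurable_fst
    have : ProbabilityTheory.IsMarkovKernel κ := by
      constructor
      intro q
      simp only [κ, ProbabilityTheory.Kernel.comap_apply]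
      exact inferInstance
    exact (StronglyMeasurable.integral_kernel_prod_right' (κ := κ)
      (f := fun p : (ℝ × Euc d) × Euc d => η i j p.1.1 (p.1.2 - p.2))
      ((hη.measurable_uncurry i j).comp (f := fun p : (ℝ × Euc d) × Euc d => (p.1.1, p.1.2 - p.2))
        (by fun_prop)).stronglyMeasurable).measurable
  exact (hV.measurable_uncurry i).comp
    (measurable_fst.prodMk (measurable_snd.prodMk (measurable_pi_lambda _ hconv)))

theorem exists_measurable_eqOn_nonlocalField (hV : HypV V MV Lx Lr) (hη : HypEta η Mη Lη)
    {T : ℝ} (hT : 0 ≤ T) {r : Fin k → ℝ → Measure (Euc d)}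
    (hrw : ∀ j (φ : Euc d → ℝ), Continuous φ → HasCompactSupport φ →
      Measurable fun t => ∫ x, φ x ∂(r j t))
    (hr : ∀ j, ∀ t ∈ Icc 0 T, IsProbabilityMeasure (r j t)) (i : Fin k) :
    ∃ b : ℝ → Euc d → Euc d, Measurable (Function.uncurry b) ∧
      EqOn (nonlocalField V η r i) b (Icc 0 T) := by
  classical
  set r' : Fin k → ℝ → Measure (Euc d) := fun j => (Icc 0 T).piecewise (r j) fun _ => r j 0
  have hr'r : ∀ j, EqOn (r' j) (r j) (Icc 0 T) := fun j t ht => piecewise_eq_of_mem _ _ _ ht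
  have : ∀ j t, IsProbabilityMeasure (r' j t) := fun j t => by
    by_cases ht : t ∈ Icc 0 T
    · rw [hr'r j ht]; exact hr j t ht
    · simp only [r', piecewise_eq_of_notMem _ _ _ ht]; exact hr j 0 ⟨le_rfl, hT⟩
  have hr' : ∀ j, Measurable (r' j) := fun j =>
    measurable_of_measurable_integral_of_hasCompactSupport fun φ hφ hφc => by
      have : (fun t => ∫ x, φ x ∂(r' j t)) =
          (Icc 0 T).piecewise (fun t => ∫ x, φ x ∂(r j t)) fun _ => ∫ x, φ x ∂(r j 0) := by
        ext t; by_cases ht : t ∈ Icc 0 T <;> simp [r', ht]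
      rw [this]
      exact (hrw j φ hφ hφc).piecewise measurableSet_Icc measurable_const
  refine ⟨nonlocalField V η r' i, measurable_uncurry_nonlocalField hV hη hr' i, fun t ht => ?_⟩
  ext1 x
  simp only [nonlocalField, hr'r _ ht]

theorem norm_nonlocalField_sub_le (hV : HypV V MV Lx Lr) (hLr : 0 ≤ Lr) (hη : HypEta η Mη Lη)
    (hLη : 0 ≤ Lη) {r s : Fin k → ℝ → Measure (Euc d)} {t : ℝ}
    [∀ j, IsProbabilityMeasure (r j t)] [∀ j, IsProbabilityMeasure (s j t)] {w : ℝ} (hw : 0 ≤ w)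
    (hW : ∀ j, W1 (r j t) (s j t) ≤ ENNReal.ofReal w) (i : Fin k) (x y : Euc d) :
    ‖nonlocalField V η r i t x - nonlocalField V η s i t y‖ ≤
      (Lx + Lr * k * Lη) * ‖x - y‖ + Lr * k * Lη * w := by
  have hconv : ∀ j, |convol (η i j t) (r j t) x - convol (η i j t) (s j t) y| ≤
      Lη * (‖x - y‖ + w) := fun j => by
    rw [← Real.dist_eq, ← edist_le_ofReal (by positivity), ENNReal.ofReal_mul hLη,
      ENNReal.ofReal_add (norm_nonneg _) hw, ofReal_norm, ← edist_eq_enorm_sub]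
    refine ((hη.lipschitzWith hLη i j t).edist_convol_le (hη.1 i j t) _ _ x y).trans ?_
    rw [ENNReal.ofReal_eq_coe_nnreal hLη]
    exact mul_le_mul' le_rfl (add_le_add_right (hW j) _)
  calc ‖nonlocalField V η r i t x - nonlocalField V η s i t y‖
      ≤ Lx * ‖x - y‖ + Lr * ∑ j, |convol (η i j t) (r j t) x - convol (η i j t) (s j t) y| :=
        hV.2.2 i t x y _ _
    _ ≤ Lx * ‖x - y‖ + Lr * ∑ _j : Fin k, Lη * (‖x - y‖ + w) := by
        gcongr with j; exact hconv j
    _ = (Lx + Lr * k * Lη) * ‖x - y‖ + Lr * k * Lη * w := by simp; ring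

end NonlocalField

section Wvec

variable {d k : ℕ}

theorem W1_le_iSup_Wvec {S : Set ℝ} {r s : Fin k → ℝ → Measure (Euc d)} {u : ℝ} (hu : u ∈ S)
    (j : Fin k) : W1 (r j u) (s j u) ≤ ⨆ t ∈ S, Wvec (fun i => r i t) (fun i => s i t) :=
  (Finset.single_le_sum (f := fun j => W1 (r j u) (s j u)) (fun _ _ => zero_le)
    (Finset.mem_univ j)).trans (le_biSup (fun t => Wvec (fun i => r i t) (fun i => s i t)) hu)

theorem Wvec_le_of_forall_W1_le {ρ σ : Fin k → Measure (Euc d)} {a : ℝ≥0∞}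
    (h : ∀ i, W1 (ρ i) (σ i) ≤ a) : Wvec ρ σ ≤ k * a :=
  (Finset.sum_le_sum fun i _ => h i).trans_eq (by simp)

theorem IsLagSolWith.apply_zero {S : Set ℝ} {b : Fin k → ℝ → Euc d → Euc d}
    {ρ₀ : Fin k → Measure (Euc d)} {ρ : Fin k → ℝ → Measure (Euc d)}
    (h : IsLagSolWith S b ρ₀ ρ) (h0 : (0 : ℝ) ∈ S) (i : Fin k) : ρ i 0 = ρ₀ i := by
  obtain ⟨X, hX, -, hρX⟩ := h i
  rw [hρX 0 h0, show X 0 = id from funext hX.1, Measure.map_id]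

end Wvec

theorem IsLagSolWith.W1_le {d k : ℕ} {V : Fin k → ℝ → Euc d → (Fin k → ℝ) → Euc d}
    {η : Fin k → Fin k → ℝ → Euc d → ℝ} {MV Mη Lx Lr Lη : ℝ} (hV : HypV V MV Lx Lr)
    (hLx : 0 ≤ Lx) (hLr : 0 ≤ Lr) (hη : HypEta η Mη Lη) (hLη : 0 ≤ Lη) {T : ℝ}
    {ρ₀ : Fin k → Measure (Euc d)} [∀ i, IsProbabilityMeasure (ρ₀ i)]
    {r s ρ σ : Fin k → ℝ → Measure (Euc d)}
    (hrL : IsLinftyFamily (Icc 0 T) r) (hsL : IsLinftyFamily (Icc 0 T) s)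
    (hr : ∀ j, ∀ t ∈ Icc 0 T, IsProbabilityMeasure (r j t))
    (hs : ∀ j, ∀ t ∈ Icc 0 T, IsProbabilityMeasure (s j t)) {w : ℝ} (hw : 0 ≤ w)
    (hW : ∀ j, ∀ t ∈ Icc 0 T, W1 (r j t) (s j t) ≤ ENNReal.ofReal w)
    (hρ : IsLagSolWith (Icc 0 T) (nonlocalField V η r) ρ₀ ρ)
    (hσ : IsLagSolWith (Icc 0 T) (nonlocalField V η s) ρ₀ σ) {t : ℝ} (ht : t ∈ Icc 0 T)
    (i : Fin k) :
    W1 (ρ i t) (σ i t) ≤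
      ENNReal.ofReal (Lr * k * Lη * w * t * Real.exp ((Lx + Lr * k * Lη) * t)) := by
  have hT : 0 ≤ T := ht.1.trans ht.2
  have hint : ∀ (q : Fin k → ℝ → Measure (Euc d)) (Z : ℝ → Euc d → Euc d),
      IsLinftyFamily (Icc 0 T) q → (∀ j, ∀ t ∈ Icc 0 T, IsProbabilityMeasure (q j t)) →
      IsFlowOn (Icc 0 T) (nonlocalField V η q i) Z →
      ∀ x, IntervalIntegrable (fun u => nonlocalField V η q i u (Z u x)) volume 0 T := by
    intro q Z hqL hq hZ x
    obtain ⟨b, hb, hqb⟩ := exists_measurable_eqOn_nonlocalField hV hη hT hqL.1 hq i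
    exact hZ.intervalIntegrable hT (fun u y => hV.1 i u y _) hb hqb x
  have hfield : ∀ u ∈ Icc 0 T, ∀ y z, ‖nonlocalField V η r i u y - nonlocalField V η s i u z‖
      ≤ (Lx + Lr * k * Lη) * ‖y - z‖ + Lr * k * Lη * w := by
    intro u hu
    have := fun j => hr j u hu
    have := fun j => hs j u hu
    exact norm_nonlocalField_sub_le hV hLr hη hLη hw (fun j => hW j u hu) i
  obtain ⟨X, hX, hXm, hρX⟩ := hρ i
  obtain ⟨Y, hY, hYm, hσY⟩ := hσ i
  rw [hρX t ht, hσY t ht]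
  refine W1_map_map_le (ρ₀ i) (hXm t ht) (hYm t ht) fun x =>
    (edist_le_ofReal (mul_nonneg (mul_nonneg (by positivity) ht.1) (by positivity))).2 ?_
  calc dist (X t x) (Y t x) = ‖X t x - Y t x‖ := dist_eq_norm _ _
    _ ≤ gronwallBound 0 (Lx + Lr * k * Lη) (Lr * k * Lη * w) t :=
        hX.norm_sub_le_gronwallBound hY (hint r X hrL hr hX x) (hint s Y hsL hs hY x)
          (by positivity) hfield t ht
    _ ≤ Lr * k * Lη * w * t * Real.exp ((Lx + Lr * k * Lη) * t) :=
        gronwallBound_zero_le (by positivity) (by positivity)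

/-- (Contraction property of the fixed-point map `𝒬`.) There is a
constant `C`, depending only on `k = ‖ρ₀‖_𝓜`, `Lip_x(V)`, `Lip_r(V)` and `Lip_x(η)`, such
that if `ρ = 𝒬(r)` and `σ = 𝒬(s)` are the Lagrangian solutions of the decoupled systems
`∂ₜ ρ^i + div (ρ^i V^i(t,x,(η^i ⋆ r_t)(x))) = 0` and
`∂ₜ σ^i + div (σ^i V^i(t,x,(η^i ⋆ s_t)(x))) = 0`, both with initial condition `ρ₀`, then
`sup_{t ∈ [0,T]} 𝒲₁(ρ_t, σ_t) ≤ C T e^{CT} sup_{t ∈ [0,T]} 𝒲₁(r_t, s_t)`;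
in particular `𝒬` is a contraction for `T` small enough with `C T e^{CT} < 1`. -/
theorem fixed_point_map_contraction
    (k : ℕ) (Lx Lr Lη : ℝ) :
    ∃ C : ℝ, 0 ≤ C ∧
      ∀ (d : ℕ) (T : ℝ), 0 ≤ T →
      ∀ (V : Fin k → ℝ → Euc d → (Fin k → ℝ) → Euc d)
        (η : Fin k → Fin k → ℝ → Euc d → ℝ) (MV Mη : ℝ),
        HypV V MV Lx Lr → HypEta η Mη Lη →
      ∀ (ρ₀ : Fin k → Measure (Euc d)), (∀ i, IsProbabilityMeasure (ρ₀ i)) →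
      ∀ (r s ρ σ : Fin k → ℝ → Measure (Euc d)),
        IsLinftyFamily (Set.Icc 0 T) r → IsLinftyFamily (Set.Icc 0 T) s →
        (∀ i, ∀ t ∈ Set.Icc (0 : ℝ) T, IsProbabilityMeasure (r i t)) →
        (∀ i, ∀ t ∈ Set.Icc (0 : ℝ) T, IsProbabilityMeasure (s i t)) →
        IsLagSolWith (Set.Icc 0 T) (nonlocalField V η r) ρ₀ ρ →
        IsLagSolWith (Set.Icc 0 T) (nonlocalField V η s) ρ₀ σ →
        (⨆ t ∈ Set.Icc (0 : ℝ) T, Wvec (fun i => ρ i t) (fun i => σ i t))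
          ≤ ENNReal.ofReal (C * T * Real.exp (C * T)) *
              ⨆ t ∈ Set.Icc (0 : ℝ) T, Wvec (fun i => r i t) (fun i => s i t) := by
  set c := max Lr 0 * k * max Lη 0
  set L := max Lx 0 + c
  -- `C ≥ 1`, so that the bound is `∞` as soon as the right-hand supremum is
  refine ⟨1 + L + k * c, by positivity, ?_⟩
  intro d T hT V η MV Mη hV hη ρ₀ hρ₀ r s ρ σ hrL hsL hr hs hρ hσ
  set W := ⨆ t ∈ Icc (0 : ℝ) T, Wvec (fun i => r i t) (fun i => s i t)
  refine iSup₂_le fun t ht => ?_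
  rcases hT.eq_or_lt with rfl | hTpos
  · obtain rfl : t = 0 := le_antisymm ht.2 ht.1
    simp [Wvec, hρ.apply_zero ht, hσ.apply_zero ht, W1_self]
  rcases eq_or_ne W ⊤ with hW | hW
  · rw [hW, ENNReal.mul_top (ENNReal.ofReal_pos.2 (by positivity)).ne']
    exact le_top
  have hcomp := hρ.W1_le (hV.mono (le_max_left Lx 0) (le_max_left Lr 0)) (le_max_right _ _)
    (le_max_right _ _) (hη.mono (le_max_left Lη 0)) (le_max_right _ _) hrL hsL hr hs
    ENNReal.toReal_nonneg (fun j u hu => (W1_le_iSup_Wvec hu j).trans_eq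
      (ENNReal.ofReal_toReal hW).symm) hσ ht
  calc Wvec (fun i => ρ i t) (fun i => σ i t)
      ≤ k * ENNReal.ofReal (c * W.toReal * t * Real.exp (L * t)) :=
        Wvec_le_of_forall_W1_le hcomp
    _ = ENNReal.ofReal (k * c * t * Real.exp (L * t) * W.toReal) := by
        rw [← ENNReal.ofReal_natCast, ← ENNReal.ofReal_mul (by positivity)]
        ring_nf
    _ ≤ ENNReal.ofReal ((1 + L + k * c) * T * Real.exp ((1 + L + k * c) * T) * W.toReal) := by
        have : 0 ≤ (k : ℝ) * c := by positivity
        gcongr <;> linarith [ht.1, ht.2, show 0 ≤ L by positivity]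
    _ = _ := by rw [ENNReal.ofReal_mul (by positivity), ENNReal.ofReal_toReal hW]
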